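/- arXiv:1701.06065 — 7 statements merged into one kernel-verified Lean document; each statement's English description precedes it below -/
import Mathlib

section
/- The normalizer in PGL_3(k̄) of the cyclic subgroup generated by the projective transformation [X:Y:Z] ↦ [X:Y:ζ₅Z] (ζ₅ a primitive 5th root of unity) is the subgroup of classes of matrices of block form with a 2×2 invertible block acting on (X,Y) and a nonzero scalar on Z. -/
open Matrix

namespace Matrix

variable {R : Type*} [CommRing R] [NoZeroDivisors R]

theorem diagonal_mul_eq_mul_diagonal_iff {m n : Type*} [Fintype m] [Fintype n]
    [DecidableEq m] [DecidableEq n] (d : m → R) (d' : n → R) (M : Matrix m n R) :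
    diagonal d * M = M * diagonal d' ↔ ∀ i j, d i = d' j ∨ M i j = 0 := by
  simp only [← Matrix.ext_iff, diagonal_mul, mul_diagonal]
  refine forall₂_congr fun i j => ?_
  rw [mul_comm (M i j), ← sub_eq_zero, ← sub_mul, mul_eq_zero, sub_eq_zero]

/-- Columns `0, 1` of `M` are eigenvectors of `diag(1, 1, ζ)` for one eigenvalue `c`, column `2` for
an eigenvalue `μ`; since they span, `c` must be the double eigenvalue `1` and `μ` must be `ζ`. -/
theorem offBlock_eq_zero_of_diagonal_mul_eq_mul_diagonal {ζ c μ : R} (hζ : ζ ≠ 1)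
    {M : Matrix (Fin 3) (Fin 3) R} (hM : M.det ≠ 0)
    (h : diagonal ![1, 1, ζ] * M = M * diagonal ![c, c, μ]) :
    M 0 2 = 0 ∧ M 1 2 = 0 ∧ M 2 0 = 0 ∧ M 2 1 = 0 := by
  rw [diagonal_mul_eq_mul_diagonal_iff] at h
  obtain rfl : c = 1 := by
    by_contra hc
    have hc' : (1 : R) ≠ c := Ne.symm hc
    have h00 := (h 0 0).resolve_left hc'
    have h01 := (h 0 1).resolve_left hc'
    have h10 := (h 1 0).resolve_left hc'
    have h11 := (h 1 1).resolve_left hc'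
    exact hM (by simp [det_fin_three, h00, h01, h10, h11])
  have hμ : (1 : R) ≠ μ := by
    rintro rfl
    exact hM (det_eq_zero_of_row_eq_zero 2 fun l =>
      (h 2 l).resolve_left (by fin_cases l <;> simpa using hζ))
  exact ⟨(h 0 2).resolve_left hμ, (h 1 2).resolve_left hμ,
    (h 2 0).resolve_left hζ, (h 2 1).resolve_left hζ⟩

end Matrix

theorem normalizer_of_order_five_diagonal_general {k : Type*} [Field k]
    (ζ : k) (hζ : IsPrimitiveRoot ζ 5)
    (M : Matrix (Fin 3) (Fin 3) k) (hM : IsUnit M) :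
    (∃ (c : k) (j : ℕ), c ≠ 0 ∧
        M⁻¹ * Matrix.diagonal ![1, 1, ζ] * M = c • (Matrix.diagonal ![1, 1, ζ]) ^ j) ↔
    (M 0 2 = 0 ∧ M 1 2 = 0 ∧ M 2 0 = 0 ∧ M 2 1 = 0) := by
  have hζ1 : ζ ≠ 1 := hζ.ne_one (by norm_num)
  have := hM.invertible
  have hD (c : k) (j : ℕ) : c • diagonal ![1, 1, ζ] ^ j = diagonal ![c, c, c * ζ ^ j] := by
    rw [diagonal_pow, ← diagonal_smul]
    congr 1
    ext l
    fin_cases l <;> simp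
  simp only [Matrix.mul_assoc, inv_mul_eq_iff_eq_mul_of_invertible, hD]
  constructor
  · rintro ⟨c, j, -, h⟩
    exact offBlock_eq_zero_of_diagonal_mul_eq_mul_diagonal hζ1 (isUnit_det_of_invertible M).ne_zero h
  · rintro ⟨h02, h12, h20, h21⟩
    refine ⟨1, 1, one_ne_zero, ?_⟩
    rw [diagonal_mul_eq_mul_diagonal_iff]
    intro i l
    fin_cases i <;> fin_cases l <;> simp [h02, h12, h20, h21]

/-- The normalizer in `PGL₃(k̄)` of the cyclic subgroup generated by
`[X:Y:Z] ↦ [X:Y:ζ₅Z]` consists exactly of (classes of) matrices of block form with an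
invertible `2×2` block acting on `(X,Y)` and a nonzero scalar on `Z`.  Stated at the level of
matrices: an invertible matrix `M` conjugates `diag(1,1,ζ₅)` into the subgroup generated by it
(up to scalars) if and only if `M` has the indicated block shape. -/
theorem normalizer_of_order_five_diagonal {k : Type*} [Field k] [IsAlgClosed k]
    (hchar : ∀ p : ℕ, CharP k p → p = 0 ∨ 13 < p)
    (ζ : k) (hζ : IsPrimitiveRoot ζ 5)
    (M : Matrix (Fin 3) (Fin 3) k) (hM : IsUnit M) :
    (∃ (c : k) (j : ℕ), c ≠ 0 ∧
        M⁻¹ * Matrix.diagonal ![1, 1, ζ] * M = c • (Matrix.diagonal ![1, 1, ζ]) ^ j) ↔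
    (M 0 2 = 0 ∧ M 1 2 = 0 ∧ M 2 0 = 0 ∧ M 2 1 = 0) :=
  normalizer_of_order_five_diagonal_general ζ hζ M hM
end

section
/- The normalizer in PGL_3(k̄) of the group generated by diag(1, ζ₁₀², ζ₁₀⁵) (an element of order 10) is the group D(k̄) of all diagonal matrices in PGL_3(k̄). -/
/-!
If `M⁻¹ D M = c • D ^ j` for `D = diag(1, ζ², ζ⁵)`, then `D M = M (c • D ^ j)` intertwines two
diagonal matrices. As the eigenvalues of `D` are distinct, every column of `M` is an eigenvector
of `D`, so `M` is a monomial matrix whose permutation `σ` satisfies `c ζ^(j eₚ) = ζ^(e_{σ p})`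
with `e = (0, 2, 5)`. Modulo `10` this congruence forces `σ = 1`, so `M` is diagonal; conversely
diagonal matrices commute with `D`.
-/

open Matrix

namespace Matrix

variable {n R : Type*} [Fintype n] [DecidableEq n] [CommRing R] [IsDomain R]
  {v w : n → R} {M : Matrix n n R}

theorem eq_of_diagonal_mul_eq_mul_diagonal (h : diagonal v * M = M * diagonal w) {i j : n}
    (hij : M i j ≠ 0) : v i = w j := by
  have hentry := congrFun (congrFun h i) j
  rw [diagonal_mul, mul_diagonal, mul_comm] at hentry
  exact mul_left_cancel₀ hij hentry

theorem exists_perm_of_diagonal_mul_eq_mul_diagonal (hv : Function.Injective v)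
    (hM : IsUnit M.det) (h : diagonal v * M = M * diagonal w) :
    ∃ σ : Equiv.Perm n, ∀ j, w j = v (σ j) := by
  have hcol : ∀ j, ∃ i, M i j ≠ 0 := fun j => by
    by_contra! hj
    exact hM.ne_zero (det_eq_zero_of_column_eq_zero j hj)
  choose σ hσ using hcol
  have hsurj : Function.Surjective σ := fun i => by
    have hrow : ∃ j, M i j ≠ 0 := by
      by_contra! hi
      exact hM.ne_zero (det_eq_zero_of_row_eq_zero i hi)
    obtain ⟨j, hij⟩ := hrow
    exact ⟨j, hv ((eq_of_diagonal_mul_eq_mul_diagonal h (hσ j)).trans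
      (eq_of_diagonal_mul_eq_mul_diagonal h hij).symm)⟩
  refine ⟨Equiv.ofBijective σ ⟨Finite.injective_iff_surjective.mpr hsurj, hsurj⟩, fun j => ?_⟩
  exact (eq_of_diagonal_mul_eq_mul_diagonal h (hσ j)).symm

end Matrix

section OrderTen

variable {K : Type*} [CommMonoid K] {ζ : K}

theorem IsPrimitiveRoot.pow_eq_pow_iff_mod_ten (hζ : IsPrimitiveRoot ζ 10) {a b : ℕ} :
    ζ ^ a = ζ ^ b ↔ a % 10 = b % 10 := by
  rw [(hζ.isOfFinOrder (by norm_num)).pow_inj_mod, ← hζ.eq_orderOf]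

theorem vec_one_pow_two_pow_five_eq_pow :
    ![1, ζ ^ 2, ζ ^ 5] = fun q => ζ ^ (![0, 2, 5] q : ℕ) := by
  ext q; fin_cases q <;> simp

theorem injective_vec_one_pow_two_pow_five (hζ : IsPrimitiveRoot ζ 10) :
    Function.Injective ![1, ζ ^ 2, ζ ^ 5] := by
  rw [vec_one_pow_two_pow_five_eq_pow]
  intro a b hab
  have hcheck : ∀ a b : Fin 3, ![0, 2, 5] a % 10 = ![0, 2, 5] b % 10 → a = b := by decide
  exact hcheck a b (hζ.pow_eq_pow_iff_mod_ten.mp hab)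

theorem perm_eq_one_of_smul_pow_vec_one_pow_two_pow_five (hζ : IsPrimitiveRoot ζ 10)
    {σ : Equiv.Perm (Fin 3)} {c : K} {j : ℕ}
    (h : ∀ q, c * ![1, ζ ^ 2, ζ ^ 5] q ^ j = ![1, ζ ^ 2, ζ ^ 5] (σ q)) : σ = 1 := by
  rw [vec_one_pow_two_pow_five_eq_pow] at h
  -- `q = 0` determines `c`, after which `h` is a finite system of congruences of exponents.
  have hc : c = ζ ^ (![0, 2, 5] (σ 0) : ℕ) := by simpa using h 0
  have hexp : ∀ q, (![0, 2, 5] (σ 0) + ![0, 2, 5] q * (j % 10)) % 10 =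
      ![0, 2, 5] (σ q) % 10 := fun q => by
    have hq : ζ ^ (![0, 2, 5] (σ 0) + ![0, 2, 5] q * j : ℕ) = ζ ^ (![0, 2, 5] (σ q) : ℕ) := by
      rw [pow_add, pow_mul, ← hc]; exact h q
    rw [← hζ.pow_eq_pow_iff_mod_ten.mp hq, Nat.add_mod, Nat.mul_mod, Nat.mod_mod,
      ← Nat.mul_mod, ← Nat.add_mod]
  have hcheck : ∀ σ : Equiv.Perm (Fin 3), ∀ j : Fin 10,
      (∀ q, (![0, 2, 5] (σ 0) + ![0, 2, 5] q * (j : ℕ)) % 10 = ![0, 2, 5] (σ q) % 10) →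
        σ = 1 := by decide
  exact hcheck σ ⟨j % 10, Nat.mod_lt _ (by norm_num)⟩ hexp

end OrderTen

theorem normalizer_of_order_ten_diagonal_general {k : Type*} [Field k]
    (ζ : k) (hζ : IsPrimitiveRoot ζ 10)
    (M : Matrix (Fin 3) (Fin 3) k) (hM : IsUnit M) :
    (∃ (c : k) (j : ℕ), c ≠ 0 ∧
        M⁻¹ * Matrix.diagonal ![1, ζ ^ 2, ζ ^ 5] * M =
          c • (Matrix.diagonal ![1, ζ ^ 2, ζ ^ 5]) ^ j) ↔
    (∀ i j : Fin 3, i ≠ j → M i j = 0) := by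
  have hdet : IsUnit M.det := (isUnit_iff_isUnit_det M).mp hM
  have hv := injective_vec_one_pow_two_pow_five hζ
  constructor
  · rintro ⟨c, j, -, h⟩
    have hconj : diagonal ![1, ζ ^ 2, ζ ^ 5] * M =
        M * diagonal (fun q => c * ![1, ζ ^ 2, ζ ^ 5] q ^ j) := by
      rw [← mul_nonsing_inv_cancel_left M (_ * M) hdet, ← mul_assoc M⁻¹, h, diagonal_pow,
        ← diagonal_smul]
      rfl
    obtain ⟨σ, hσ⟩ := exists_perm_of_diagonal_mul_eq_mul_diagonal hv hdet hconj
    obtain rfl := perm_eq_one_of_smul_pow_vec_one_pow_two_pow_five hζ hσ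
    intro i q hiq
    by_contra hMiq
    exact hiq (hv ((eq_of_diagonal_mul_eq_mul_diagonal hconj hMiq).trans (hσ q)))
  · intro hdiag
    refine ⟨1, 1, one_ne_zero, ?_⟩
    have hM_eq : diagonal (diag M) = M := (isDiag_iff_diagonal_diag M).mp hdiag
    rw [mul_assoc, ← hM_eq, (commute_diagonal _ _).eq, hM_eq, ← mul_assoc,
      nonsing_inv_mul M hdet, one_mul, one_smul, pow_one]

/-- The normalizer in `PGL₃(k̄)` of the group generated by `diag(1, ζ₁₀², ζ₁₀⁵)` (an element of
order `10`, `ζ₁₀` a primitive 10th root of unity) is the group of diagonal matrices: an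
invertible matrix `M` conjugates `diag(1,ζ₁₀²,ζ₁₀⁵)` into the subgroup it generates (up to
scalars) if and only if `M` is diagonal. -/
theorem normalizer_of_order_ten_diagonal {k : Type*} [Field k] [IsAlgClosed k]
    (hchar : ∀ p : ℕ, CharP k p → p = 0 ∨ 13 < p)
    (ζ : k) (hζ : IsPrimitiveRoot ζ 10)
    (M : Matrix (Fin 3) (Fin 3) k) (hM : IsUnit M) :
    (∃ (c : k) (j : ℕ), c ≠ 0 ∧
        M⁻¹ * Matrix.diagonal ![1, ζ ^ 2, ζ ^ 5] * M =
          c • (Matrix.diagonal ![1, ζ ^ 2, ζ ^ 5]) ^ j) ↔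
    (∀ i j : Fin 3, i ≠ j → M i j = 0) :=
  normalizer_of_order_ten_diagonal_general ζ hζ M hM
end

section
/- The projective transformation [X:Y:Z] ↦ [X : ζ₂₀⁴Y : ζ₂₀⁵Z] has order 20 in PGL_3(k̄) and preserves the quintic X⁵ + Y⁵ + XZ⁴ = 0. -/
open Matrix

theorem IsPrimitiveRoot.pow_pow_eq_one_and_pow_pow_eq_one_iff {M : Type*} [CommMonoid M]
    {ζ : M} {k a b n : ℕ} (hζ : IsPrimitiveRoot ζ k) (hab : a.Coprime b) :
    (ζ ^ a) ^ n = 1 ∧ (ζ ^ b) ^ n = 1 ↔ k ∣ n := by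
  rw [pow_right_comm, pow_right_comm ζ b, pow_eq_one_iff_of_coprime hab, hζ.pow_eq_one_iff_dvd]

theorem Matrix.exists_diagonal_pow_eq_smul_one_iff {R : Type*} [CommSemiring R] (a b : R)
    (n : ℕ) : (∃ c : R, diagonal ![1, a, b] ^ n = c • (1 : Matrix (Fin 3) (Fin 3) R)) ↔
      a ^ n = 1 ∧ b ^ n = 1 := by
  simp only [diagonal_pow, smul_one_eq_diagonal, diagonal_eq_diagonal_iff, Fin.forall_fin_succ,
    Pi.pow_apply]
  constructor
  · rintro ⟨c, h0, h1, h2, -⟩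
    simp_all
  · rintro ⟨ha, hb⟩
    exact ⟨1, by simp [ha, hb]⟩

theorem order_twenty_automorphism_general {k : Type*} [Field k]
    (ζ : k) (hζ : IsPrimitiveRoot ζ 20) :
    (∀ n : ℕ, 0 < n → n < 20 →
      ¬∃ c : k, (Matrix.diagonal ![1, ζ ^ 4, ζ ^ 5]) ^ n = c • (1 : Matrix (Fin 3) (Fin 3) k)) ∧
    (∃ c : k, (Matrix.diagonal ![1, ζ ^ 4, ζ ^ 5]) ^ 20 = c • (1 : Matrix (Fin 3) (Fin 3) k)) ∧
    (∃ c : k, c ≠ 0 ∧ ∀ x y z : k,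
      x ^ 5 + (ζ ^ 4 * y) ^ 5 + x * (ζ ^ 5 * z) ^ 4 = c * (x ^ 5 + y ^ 5 + x * z ^ 4)) := by
  have scalar_iff (n : ℕ) :
      (∃ c : k, diagonal ![1, ζ ^ 4, ζ ^ 5] ^ n = c • (1 : Matrix (Fin 3) (Fin 3) k)) ↔ 20 ∣ n :=
    (exists_diagonal_pow_eq_smul_one_iff _ _ n).trans
      (hζ.pow_pow_eq_one_and_pow_pow_eq_one_iff (by norm_num))
  refine ⟨fun n hn hn20 hscalar => ?_, (scalar_iff 20).2 dvd_rfl, 1, one_ne_zero, fun x y z => ?_⟩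
  · have := (scalar_iff n).1 hscalar
    omega
  · linear_combination (y ^ 5 + x * z ^ 4) * hζ.pow_eq_one

/-- The transformation `[X:Y:Z] ↦ [X : ζ₂₀⁴Y : ζ₂₀⁵Z]` has order `20` in `PGL₃(k̄)` (its powers
below the 20th are not scalar, and its 20th power is scalar) and it preserves the quintic
`X⁵ + Y⁵ + XZ⁴ = 0` (the substitution scales the defining polynomial by a nonzero constant). -/
theorem order_twenty_automorphism {k : Type*} [Field k] [IsAlgClosed k]
    (hchar : ∀ p : ℕ, CharP k p → p = 0 ∨ 13 < p)
    (ζ : k) (hζ : IsPrimitiveRoot ζ 20) :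
    (∀ n : ℕ, 0 < n → n < 20 →
      ¬∃ c : k, (Matrix.diagonal ![1, ζ ^ 4, ζ ^ 5]) ^ n = c • (1 : Matrix (Fin 3) (Fin 3) k)) ∧
    (∃ c : k, (Matrix.diagonal ![1, ζ ^ 4, ζ ^ 5]) ^ 20 = c • (1 : Matrix (Fin 3) (Fin 3) k)) ∧
    (∃ c : k, c ≠ 0 ∧ ∀ x y z : k,
      x ^ 5 + (ζ ^ 4 * y) ^ 5 + x * (ζ ^ 5 * z) ^ 4 = c * (x ^ 5 + y ^ 5 + x * z ^ 4)) :=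
  order_twenty_automorphism_general ζ hζ
end

section
/- For the curve X⁵ + Y⁵ + aXZ⁴ + X³Z² = 0 with parameter a, the points (1:0:0) and (0:1:0) are nonsingular, and the plane curve is singular if a = 0 or a = 1/4 (over a field of characteristic 0). -/
/-!
Since `∂F_a/∂Y = 5Y⁴`, every singular point lies on `Y = 0`, and `F_a` takes the value `1` at
`(1:0:0)` and `(0:1:0)`. The point `(0:0:1)` lies on every curve of the family and `∂F_a/∂X`
equals `a` there, so it is singular for `a = 0`. For `a = 1/4` one has
`∂F_a/∂Z = XZ(Z² + 2X²)`, and the curve is singular at `(x:0:1)` with `2x² = -1`; such an `x`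
exists because the field is algebraically closed.
-/

open MvPolynomial

def MvPolynomial.IsSingularPoint {σ R : Type*} [CommRing R] (F : MvPolynomial σ R) (P : σ → R) :
    Prop :=
  eval P F = 0 ∧ ∀ i, eval P (pderiv i F) = 0

section QuinticFamily

variable {R : Type*} [CommRing R]

noncomputable def quinticFamily (a : R) : MvPolynomial (Fin 3) R :=
  X 0 ^ 5 + X 1 ^ 5 + C a * X 0 * X 2 ^ 4 + X 0 ^ 3 * X 2 ^ 2

theorem eval_quinticFamily (a : R) (P : Fin 3 → R) :
    eval P (quinticFamily a) = P 0 ^ 5 + P 1 ^ 5 + a * P 0 * P 2 ^ 4 + P 0 ^ 3 * P 2 ^ 2 := by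
  simp [quinticFamily]

theorem eval_pderiv_zero_quinticFamily (a : R) (P : Fin 3 → R) :
    eval P (pderiv 0 (quinticFamily a)) = 5 * P 0 ^ 4 + a * P 2 ^ 4 + 3 * P 0 ^ 2 * P 2 ^ 2 := by
  simp [quinticFamily, pderiv_X]
  ring

theorem eval_pderiv_one_quinticFamily (a : R) (P : Fin 3 → R) :
    eval P (pderiv 1 (quinticFamily a)) = 5 * P 1 ^ 4 := by
  simp [quinticFamily, pderiv_X]

theorem eval_pderiv_two_quinticFamily (a : R) (P : Fin 3 → R) :
    eval P (pderiv 2 (quinticFamily a)) = 4 * a * P 0 * P 2 ^ 3 + 2 * P 0 ^ 3 * P 2 := by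
  simp [quinticFamily, pderiv_X]
  ring

theorem isSingularPoint_quinticFamily_iff (a : R) (P : Fin 3 → R) :
    (quinticFamily a).IsSingularPoint P ↔
      P 0 ^ 5 + P 1 ^ 5 + a * P 0 * P 2 ^ 4 + P 0 ^ 3 * P 2 ^ 2 = 0 ∧
      5 * P 0 ^ 4 + a * P 2 ^ 4 + 3 * P 0 ^ 2 * P 2 ^ 2 = 0 ∧
      5 * P 1 ^ 4 = 0 ∧
      4 * a * P 0 * P 2 ^ 3 + 2 * P 0 ^ 3 * P 2 = 0 := by
  rw [IsSingularPoint, Fin.forall_fin_succ, Fin.forall_fin_two, Fin.succ_zero_eq_one,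
    Fin.succ_one_eq_two, eval_quinticFamily, eval_pderiv_zero_quinticFamily,
    eval_pderiv_one_quinticFamily, eval_pderiv_two_quinticFamily]

theorem not_isSingularPoint_quinticFamily_one_zero_zero [Nontrivial R] (a : R) :
    ¬(quinticFamily a).IsSingularPoint (![1, 0, 0] : Fin 3 → R) := fun h =>
  (one_ne_zero : (1 : R) ≠ 0) (by simpa [eval_quinticFamily] using h.1)

theorem not_isSingularPoint_quinticFamily_zero_one_zero [Nontrivial R] (a : R) :
    ¬(quinticFamily a).IsSingularPoint (![0, 1, 0] : Fin 3 → R) := fun h =>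
  (one_ne_zero : (1 : R) ≠ 0) (by simpa [eval_quinticFamily] using h.1)

theorem isSingularPoint_quinticFamily_zero :
    (quinticFamily (0 : R)).IsSingularPoint ![0, 0, 1] := by
  simp [isSingularPoint_quinticFamily_iff]

theorem isSingularPoint_quinticFamily_of_four_mul_eq_one {a x : R} (ha : 4 * a = 1)
    (hx : 2 * x ^ 2 = -1) : (quinticFamily a).IsSingularPoint ![x, 0, 1] := by
  simp only [isSingularPoint_quinticFamily_iff, Matrix.cons_val_zero, Matrix.cons_val_one,
    Matrix.cons_val_two, Matrix.head_cons, Matrix.tail_cons]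
  refine ⟨?_, ?_, by ring, ?_⟩
  · linear_combination -(x ^ 5 + x ^ 3) * ha + a * x * (2 * x ^ 2 + 1) * hx
  · linear_combination -(5 * x ^ 4 + 3 * x ^ 2) * ha + a * (10 * x ^ 2 + 1) * hx
  · linear_combination x * ha + x * hx

end QuinticFamily

/-- For `F_a = X⁵ + Y⁵ + aXZ⁴ + X³Z²` over an algebraically closed field of characteristic `0`,
the points `(1:0:0)` and `(0:1:0)` are nonsingular points, and if `a = 0` or `a = 1/4` the
plane curve `F_a = 0` is singular. -/
theorem quintic_family_singular_values {k : Type*} [Field k] [IsAlgClosed k] [CharZero k]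
    (a : k) :
    ¬(eval ![1, 0, 0] ((X 0) ^ 5 + (X 1) ^ 5 + C a * X 0 * (X 2) ^ 4 + (X 0) ^ 3 * (X 2) ^ 2 :
          MvPolynomial (Fin 3) k) = 0 ∧
      ∀ i : Fin 3, eval ![1, 0, 0]
        (pderiv i ((X 0) ^ 5 + (X 1) ^ 5 + C a * X 0 * (X 2) ^ 4 + (X 0) ^ 3 * (X 2) ^ 2 :
          MvPolynomial (Fin 3) k)) = 0) ∧
    ¬(eval ![0, 1, 0] ((X 0) ^ 5 + (X 1) ^ 5 + C a * X 0 * (X 2) ^ 4 + (X 0) ^ 3 * (X 2) ^ 2 :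
          MvPolynomial (Fin 3) k) = 0 ∧
      ∀ i : Fin 3, eval ![0, 1, 0]
        (pderiv i ((X 0) ^ 5 + (X 1) ^ 5 + C a * X 0 * (X 2) ^ 4 + (X 0) ^ 3 * (X 2) ^ 2 :
          MvPolynomial (Fin 3) k)) = 0) ∧
    ((a = 0 ∨ a = 1 / 4) → ∃ P : Fin 3 → k, P ≠ 0 ∧
      eval P ((X 0) ^ 5 + (X 1) ^ 5 + C a * X 0 * (X 2) ^ 4 + (X 0) ^ 3 * (X 2) ^ 2 :
          MvPolynomial (Fin 3) k) = 0 ∧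
      ∀ i : Fin 3, eval P
        (pderiv i ((X 0) ^ 5 + (X 1) ^ 5 + C a * X 0 * (X 2) ^ 4 + (X 0) ^ 3 * (X 2) ^ 2 :
          MvPolynomial (Fin 3) k)) = 0) := by
  change ¬(quinticFamily a).IsSingularPoint ![1, 0, 0] ∧
    ¬(quinticFamily a).IsSingularPoint ![0, 1, 0] ∧
    ((a = 0 ∨ a = 1 / 4) → ∃ P : Fin 3 → k, P ≠ 0 ∧ (quinticFamily a).IsSingularPoint P)
  refine ⟨not_isSingularPoint_quinticFamily_one_zero_zero a,
    not_isSingularPoint_quinticFamily_zero_one_zero a, ?_⟩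
  rintro (rfl | rfl)
  · exact ⟨![0, 0, 1], fun h => one_ne_zero (congrFun h 2), isSingularPoint_quinticFamily_zero⟩
  · obtain ⟨x, hx⟩ := IsAlgClosed.exists_pow_nat_eq (-(1 / 2) : k) two_pos
    exact ⟨![x, 0, 1], fun h => one_ne_zero (congrFun h 2),
      isSingularPoint_quinticFamily_of_four_mul_eq_one (by norm_num)
        (by linear_combination 2 * hx)⟩
end

section
/- Every automorphism of the Fermat curve X⁷ + Y⁷ + Z⁷ = 0 is of the form a permutation of coordinates composed with diag(1, ζ₇ᵃ, ζ₇ᵇ), and none of these 6·49 = 294 automorphisms has order 6. -/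
/-!
A linear map `M` preserving the cone `F = ∑ xᵢᵈ = 0` multiplies `F` by a constant `λ`: for fixed
`x, y`, the polynomial `z ↦ F(M(x, y, z)) - λ (zᵈ + xᵈ + yᵈ)` has degree `< d` and vanishes at the
`d` roots of `zᵈ = -xᵈ - yᵈ`. Differentiating `F ∘ M = λ F` twice gives
`Mᵀ diag((Mv)ᵢᵈ⁻²) M = λ diag(vⱼᵈ⁻²)`, so `det(M)² ∏ (Mv)ᵢᵈ⁻² = λ³ ∏ vⱼᵈ⁻²`. The product of the
linear forms `(Mv)ᵢ` therefore vanishes on every coordinate plane, which forces `M` to be monomial,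
with entries satisfying `eⱼᵈ = λ`.

A permutation of three letters satisfies `σ² = 1` or `σ³ = 1`. If `σᵐ = 1` then `Mᵐ` is diagonal;
its entries have equal `7`-th powers `λᵐ`, and equal `(6/m)`-th powers when `M⁶` is scalar. As
`7` is prime to `6/m`, the entries coincide and `Mᵐ` is scalar.
-/

open Matrix

namespace FermatCurve

variable {ι k : Type*} [Field k]

section Polynomial

open Polynomial

variable [Fintype ι]

lemma natDegree_sum_linear_pow_sub_lt {d : ℕ} (hd : 0 < d) (a b : ι → k) (s : k) :
    (∑ i, (C (a i) + C (b i) * X) ^ d - C (∑ i, b i ^ d) * (X ^ d + C s)).natDegree < d := by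
  set q : k[X] := ∑ i, (C (a i) + C (b i) * X) ^ d - C (∑ i, b i ^ d) * (X ^ d + C s)
  have hlin : ∀ i, (C (a i) + C (b i) * X : k[X]).natDegree ≤ 1 := fun i => by compute_degree
  have hle : q.natDegree ≤ d := by
    refine (natDegree_sub_le_of_le (m := d) (n := d) ?_ ?_).trans (max_self d).le
    · exact natDegree_sum_le_of_forall_le _ _ fun i _ => by
        simpa using natDegree_pow_le_of_le d (hlin i)
    · compute_degree
  have hcoeff : q.coeff d = 0 := by
    have h1 : ∀ i, ((C (a i) + C (b i) * X) ^ d).coeff d = b i ^ d := fun i => by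
      simpa using coeff_pow_of_natDegree_le (m := d) (hlin i)
    simp only [q, coeff_sub, finsetSum_coeff, h1, coeff_C_mul, coeff_add, coeff_X_pow, coeff_C,
      if_pos, hd.ne', if_false, add_zero, mul_one, sub_self]
  have := natDegree_le_pred hle hcoeff
  omega

lemma sum_linear_pow_eq_of_forall_pow_add_eq_zero [IsAlgClosed k] {d : ℕ} (hd : 0 < d) {ζ : k}
    (hζ : IsPrimitiveRoot ζ d) {a b : ι → k} {s : k} (hs : s ≠ 0)
    (h : ∀ z, z ^ d + s = 0 → ∑ i, (a i + b i * z) ^ d = 0) (z : k) :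
    ∑ i, (a i + b i * z) ^ d = (∑ i, b i ^ d) * (z ^ d + s) := by
  obtain ⟨z₀, hz₀⟩ := IsAlgClosed.exists_pow_nat_eq (-s) hd
  have hz₀0 : z₀ ≠ 0 := by rintro rfl; simp [zero_pow hd.ne', eq_comm] at hz₀; exact hs hz₀
  have hroot : ∀ t : Fin d, (z₀ * ζ ^ (t : ℕ)) ^ d + s = 0 := fun t => by
    rw [mul_pow, ← pow_mul, pow_mul', hζ.pow_eq_one, one_pow, mul_one, hz₀, neg_add_cancel]
  have hq : ∑ i, (C (a i) + C (b i) * X) ^ d - C (∑ i, b i ^ d) * (X ^ d + C s) = 0 :=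
    eq_zero_of_natDegree_lt_card_of_eval_eq_zero _
      (f := fun t : Fin d => z₀ * ζ ^ (t : ℕ))
      (fun t₁ t₂ h => Fin.ext (hζ.pow_inj t₁.isLt t₂.isLt (mul_left_cancel₀ hz₀0 h)))
      (fun t => by simp [eval_finsetSum, h _ (hroot t), hroot t])
      (by simpa using natDegree_sum_linear_pow_sub_lt hd a b s)
  simpa [eval_finsetSum, sub_eq_zero] using congrArg (eval z) hq

end Polynomial

section Monomial

variable [DecidableEq ι]

def monomialMatrix (σ : Equiv.Perm ι) (e : ι → k) : Matrix ι ι k :=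
  of fun i j => if σ j = i then e j else 0

lemma monomialMatrix_one (e : ι → k) : monomialMatrix 1 e = diagonal e := by
  ext i j
  rcases eq_or_ne j i with rfl | h
  · simp [monomialMatrix]
  · simp [monomialMatrix, h, h.symm]

lemma smul_monomialMatrix (c : k) (σ : Equiv.Perm ι) (e : ι → k) :
    c • monomialMatrix σ e = monomialMatrix σ (c • e) := by
  ext i j
  simp [monomialMatrix]

variable [Fintype ι]

lemma monomialMatrix_mul (σ τ : Equiv.Perm ι) (e f : ι → k) :
    monomialMatrix σ e * monomialMatrix τ f = monomialMatrix (σ * τ) fun j => e (τ j) * f j := by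
  ext i j
  simp only [monomialMatrix, mul_apply, of_apply, Equiv.Perm.mul_apply, mul_ite, ite_mul, zero_mul,
    mul_zero]
  rw [Finset.sum_eq_single (τ j) (fun l _ hl => by simp [Ne.symm hl]) (by simp)]
  split_ifs <;> simp_all

lemma monomialMatrix_pow (σ : Equiv.Perm ι) (e : ι → k) (n : ℕ) :
    monomialMatrix σ e ^ n =
      monomialMatrix (σ ^ n) fun j => ∏ t ∈ Finset.range n, e ((σ ^ t) j) := by
  induction n with
  | zero => simp [monomialMatrix_one]
  | succ n ih =>
    rw [pow_succ, ih, monomialMatrix_mul, pow_succ]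
    congr 1
    ext j
    rw [Finset.prod_range_succ']
    simp [pow_succ]

lemma ne_zero_of_det_monomialMatrix_ne_zero {σ : Equiv.Perm ι} {e : ι → k}
    (h : (monomialMatrix σ e).det ≠ 0) (j : ι) : e j ≠ 0 := fun hj =>
  h (det_eq_zero_of_column_eq_zero j fun i => by simp [monomialMatrix, hj])

lemma exists_eq_monomialMatrix {M : Matrix ι ι k} (hM : M.det ≠ 0)
    (h : ∀ j, ∃ i, ∀ j' ≠ j, M i j' = 0) : ∃ σ e, M = monomialMatrix σ e := by
  choose φ hφ using h
  have hφ_inj : φ.Injective := fun j₁ j₂ hj => by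
    by_contra hne
    refine hM (det_eq_zero_of_row_eq_zero (φ j₁) fun j' => ?_)
    rcases eq_or_ne j' j₁ with rfl | hj'
    · exact hj ▸ hφ j₂ j' hne
    · exact hφ j₁ j' hj'
  have hφ_bij := Finite.injective_iff_bijective.1 hφ_inj
  refine ⟨Equiv.ofBijective φ hφ_bij, fun j => M (φ j) j, ?_⟩
  ext i j
  obtain ⟨j₂, rfl⟩ := hφ_bij.2 i
  simp only [monomialMatrix, of_apply, Equiv.ofBijective_apply, hφ_inj.eq_iff]
  split_ifs with hj
  · rw [hj]
  · exact hφ j₂ j hj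

lemma exists_pow_eq_smul_one [Nonempty ι] {d m r : ℕ} [NeZero d] (hdr : d.Coprime r)
    {σ : Equiv.Perm ι} (hσ : σ ^ m = 1) {e : ι → k} {c : k} (hc : c ≠ 0)
    (he : ∀ j, e j ^ d = c) (h : ∃ a : k, monomialMatrix σ e ^ (m * r) = a • 1) :
    ∃ a : k, a ≠ 0 ∧ monomialMatrix σ e ^ m = a • 1 := by
  obtain ⟨a, ha⟩ := h
  set u : ι → k := fun j => ∏ t ∈ Finset.range m, e ((σ ^ t) j)
  have hpow : monomialMatrix σ e ^ m = diagonal u := by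
    rw [monomialMatrix_pow, hσ, monomialMatrix_one]
  have hud : ∀ j, u j ^ d = c ^ m := fun j => by simp [u, ← Finset.prod_pow, he]
  have hu0 : ∀ j, u j ≠ 0 := fun j hj =>
    pow_ne_zero m hc (by rw [← hud j, hj, zero_pow (NeZero.ne d)])
  have hur : ∀ j, u j ^ r = a := fun j => by
    simpa using congrFun₂ (by rw [← ha, pow_mul, hpow, diagonal_pow] : diagonal (u ^ r) = a • 1) j j
  obtain ⟨j₀⟩ := ‹Nonempty ι›
  have hu : ∀ j, u j = u j₀ := fun j => by
    refine (div_eq_one_iff_eq (hu0 j₀)).1 ((pow_eq_one_iff_of_coprime hdr).1 ⟨?_, ?_⟩)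
    · rw [div_pow, hud, hud, div_self (pow_ne_zero m hc)]
    · rw [div_pow, hur, hur, div_self (hur j₀ ▸ pow_ne_zero r (hu0 j₀))]
  refine ⟨u j₀, hu0 j₀, ?_⟩
  rw [hpow, smul_one_eq_diagonal]
  exact congrArg diagonal (funext hu)

end Monomial

section Fermat

open MvPolynomial

variable [Fintype ι]

noncomputable def linearForm (M : Matrix ι ι k) (i : ι) : MvPolynomial ι k := ∑ j, C (M i j) * X j

@[simp]
lemma eval_linearForm (M : Matrix ι ι k) (v : ι → k) (i : ι) :
    eval v (linearForm M i) = (M *ᵥ v) i := by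
  simp [linearForm, mulVec, dotProduct]

lemma exists_sum_linearForm_pow_eq_C_mul [IsAlgClosed k] {d : ℕ} (hd : 0 < d) {ζ : k}
    (hζ : IsPrimitiveRoot ζ d) (M : Matrix (Fin 3) (Fin 3) k)
    (hM : ∀ v : Fin 3 → k, ∑ i, v i ^ d = 0 → ∑ i, (M *ᵥ v) i ^ d = 0) :
    ∃ c, ∑ i, linearForm M i ^ d = C c * ∑ j, X j ^ d := by
  refine ⟨∑ i, M i 2 ^ d, sub_eq_zero.1 ?_⟩
  have hmulVec : ∀ (v : Fin 3 → k) i, (M *ᵥ v) i = M i 0 * v 0 + M i 1 * v 1 + M i 2 * v 2 :=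
    fun v i => by simp [mulVec, dotProduct, Fin.sum_univ_three]
  have hQ : (X 0 ^ d + X 1 ^ d : MvPolynomial (Fin 3) k) ≠ 0 := fun h => by
    simpa [zero_pow hd.ne'] using congrArg (eval (Pi.single 0 1)) h
  -- The difference vanishes off the hypersurface `X₀ᵈ + X₁ᵈ = 0`, so its product with
  -- `X₀ᵈ + X₁ᵈ` vanishes everywhere.
  refine (mul_eq_zero.1 (MvPolynomial.funext fun v => ?_)).resolve_right hQ
  rcases eq_or_ne (v 0 ^ d + v 1 ^ d) 0 with hs | hs
  · simp [hs]
  have hcone : ∀ z, z ^ d + (v 0 ^ d + v 1 ^ d) = 0 →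
      ∑ i, (M i 0 * v 0 + M i 1 * v 1 + M i 2 * z) ^ d = 0 := fun z hz => by
    have := hM ![v 0, v 1, z] (by simp [Fin.sum_univ_three]; linear_combination hz)
    simpa [hmulVec] using this
  have key := sum_linear_pow_eq_of_forall_pow_add_eq_zero hd hζ
    (a := fun i => M i 0 * v 0 + M i 1 * v 1) (b := fun i => M i 2) hs hcone (v 2)
  rw [map_zero, map_mul]
  refine mul_eq_zero_of_left ?_ _
  simp only [map_sub, map_sum, map_pow, map_mul, eval_linearForm, eval_C, eval_X, hmulVec]
  rw [key]
  simp only [Fin.sum_univ_three]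
  ring

variable [DecidableEq ι]

@[simp]
lemma pderiv_linearForm (M : Matrix ι ι k) (i j : ι) : pderiv j (linearForm M i) = C (M i j) := by
  simp [linearForm, pderiv_X, Pi.single_apply]

lemma linearForm_one (i : ι) : linearForm (1 : Matrix ι ι k) i = X i := by
  simp [linearForm, one_apply]

omit [Fintype ι] [DecidableEq ι] in
lemma pderiv_pderiv_pow {σ R : Type*} [CommRing R] {a b : σ} {f : MvPolynomial σ R}
    (hf : pderiv a (pderiv b f) = 0) (n : ℕ) :
    pderiv a (pderiv b (f ^ n)) = ((n * (n - 1) : ℕ) : MvPolynomial σ R) * f ^ (n - 2) *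
      pderiv a f * pderiv b f := by
  rw [pderiv_pow, pderiv_mul, pderiv_mul, pderiv_pow, hf, Derivation.map_natCast]
  rw [Nat.sub_sub, one_add_one_eq_two, Nat.cast_mul]
  ring

lemma eval_pderiv_pderiv_sum_linearForm_pow (M : Matrix ι ι k) (d : ℕ) (v : ι → k) (a b : ι) :
    eval v (pderiv a (pderiv b (∑ i, linearForm M i ^ d))) =
      ((d * (d - 1) : ℕ) : k) * (Mᵀ * diagonal (fun i => (M *ᵥ v) i ^ (d - 2)) * M) a b := by
  rw [mul_apply, Finset.mul_sum]
  simp only [map_sum, pderiv_pderiv_pow (f := linearForm M _) (by simp), pderiv_linearForm,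
    mul_diagonal, transpose_apply, map_mul, map_pow, eval_C, eval_linearForm, map_natCast]
  refine Finset.sum_congr rfl fun i _ => ?_
  ring

lemma transpose_mul_diagonal_mul_eq_smul_diagonal {d : ℕ} (hd : ((d * (d - 1) : ℕ) : k) ≠ 0)
    {M : Matrix ι ι k} {c : k} (h : ∑ i, linearForm M i ^ d = C c * ∑ j, X j ^ d) (v : ι → k) :
    Mᵀ * diagonal (fun i => (M *ᵥ v) i ^ (d - 2)) * M = c • diagonal (fun j => v j ^ (d - 2)) := by
  ext a b
  have h2 := congrArg (fun p => eval v (pderiv a (pderiv b p))) h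
  simp_rw [← linearForm_one (k := k)] at h2
  simp only [pderiv_C_mul, map_mul, eval_C, eval_pderiv_pderiv_sum_linearForm_pow, one_mulVec,
    transpose_one, one_mul, mul_one, mul_left_comm c] at h2
  simpa using mul_left_cancel₀ hd h2

lemma det_sq_mul_prod_mulVec_pow {d : ℕ} (hd : ((d * (d - 1) : ℕ) : k) ≠ 0)
    {M : Matrix ι ι k} {c : k} (h : ∑ i, linearForm M i ^ d = C c * ∑ j, X j ^ d) (v : ι → k) :
    M.det ^ 2 * ∏ i, (M *ᵥ v) i ^ (d - 2) = c ^ Fintype.card ι * ∏ j, v j ^ (d - 2) := by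
  have := congrArg det (transpose_mul_diagonal_mul_eq_smul_diagonal hd h v)
  rw [det_mul, det_mul, det_transpose, det_diagonal, det_smul, det_diagonal] at this
  rw [← this]
  ring

lemma exists_row_eq_zero_of_prod_mulVec_eq_zero [Infinite k] {M : Matrix ι ι k} {j : ι}
    (h : ∀ v : ι → k, v j = 0 → ∏ i, (M *ᵥ v) i = 0) : ∃ i, ∀ j' ≠ j, M i j' = 0 := by
  have hprod : ∏ i, linearForm (M.updateCol j 0) i = 0 := MvPolynomial.funext fun v => by
    have hv : M.updateCol j 0 *ᵥ v = M *ᵥ Function.update v j 0 := by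
      ext i
      simp only [mulVec, dotProduct, updateCol_apply, Function.update_apply]
      refine Finset.sum_congr rfl fun j' _ => ?_
      split_ifs <;> simp
    simp [hv, h _ (Function.update_self j 0 v)]
  obtain ⟨i, -, hi⟩ := Finset.prod_eq_zero_iff.1 hprod
  refine ⟨i, fun j' hj' => ?_⟩
  simpa [hj'] using congrArg (pderiv j') hi

theorem exists_monomialMatrix_of_forall_sum_pow_eq_zero [IsAlgClosed k] {d : ℕ} (hd : 3 ≤ d)
    (hdk : ((d * (d - 1) : ℕ) : k) ≠ 0) {ζ : k} (hζ : IsPrimitiveRoot ζ d)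
    {M : Matrix (Fin 3) (Fin 3) k} (hM : M.det ≠ 0)
    (hpres : ∀ v : Fin 3 → k, ∑ i, v i ^ d = 0 → ∑ i, (M *ᵥ v) i ^ d = 0) :
    ∃ σ e c, c ≠ 0 ∧ (∀ j, e j ^ d = c) ∧ M = monomialMatrix σ e := by
  obtain ⟨c, hc⟩ := exists_sum_linearForm_pow_eq_C_mul (by omega) hζ M hpres
  have hrows : ∀ j, ∃ i, ∀ j' ≠ j, M i j' = 0 := fun j =>
    exists_row_eq_zero_of_prod_mulVec_eq_zero fun v hv => by
      have := det_sq_mul_prod_mulVec_pow hdk hc v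
      rw [Finset.prod_eq_zero (f := fun j => v j ^ (d - 2)) (Finset.mem_univ j)
          (by simp [hv, zero_pow (by omega : d - 2 ≠ 0)]),
        mul_zero, Finset.prod_pow] at this
      exact (pow_eq_zero_iff (by omega)).1 ((mul_eq_zero.1 this).resolve_left (pow_ne_zero 2 hM))
  obtain ⟨σ, e, rfl⟩ := exists_eq_monomialMatrix hM hrows
  have he : ∀ j, e j ^ d = c := fun j => by
    simpa [monomialMatrix, ite_pow, Pi.single_apply, zero_pow (by omega : d ≠ 0)]
      using congrArg (eval (Pi.single j 1)) hc
  exact ⟨σ, e, c, he 0 ▸ pow_ne_zero d (ne_zero_of_det_monomialMatrix_ne_zero hM 0), he, rfl⟩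

end Fermat

lemma exists_smul_monomialMatrix_eq {d : ℕ} [NeZero d] {ζ : k} (hζ : IsPrimitiveRoot ζ d)
    {σ : Equiv.Perm (Fin 3)} {e : Fin 3 → k} {c : k} (hc : c ≠ 0) (he : ∀ j, e j ^ d = c) :
    ∃ (a b : ℕ) (c' : k), c' ≠ 0 ∧ c' • monomialMatrix σ e = monomialMatrix σ ![1, ζ ^ a, ζ ^ b] := by
  have he0 : e 0 ≠ 0 := fun h => hc (by rw [← he 0, h, zero_pow (NeZero.ne d)])
  choose f hf using fun j => hζ.eq_pow_of_pow_eq_one (ξ := (e 0)⁻¹ * e j)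
    (by rw [mul_pow, inv_pow, he, he, inv_mul_cancel₀ hc])
  refine ⟨f 1, f 2, (e 0)⁻¹, inv_ne_zero he0, ?_⟩
  rw [smul_monomialMatrix]
  congr 1
  ext j
  fin_cases j <;> simp [(hf _).2, he0]

lemma natCast_ne_zero_of_forall_charP {n m : ℕ} (hchar : ∀ p : ℕ, CharP k p → p = 0 ∨ n < p)
    (hm : m ≠ 0) (hmn : m ≤ n) : (m : k) ≠ 0 := fun h => by
  have hdvd := (ringChar.spec k m).1 h
  rcases hchar _ (ringChar.charP k) with h0 | hlt
  · exact hm (Nat.eq_zero_of_zero_dvd (h0 ▸ hdvd))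
  · exact absurd (Nat.le_of_dvd (Nat.pos_of_ne_zero hm) hdvd) (by omega)

end FermatCurve

open FermatCurve

/-- Every automorphism of the Fermat septic `X⁷ + Y⁷ + Z⁷ = 0` is (up to scalar) a permutation
of the coordinates composed with `diag(1, ζ₇ᵃ, ζ₇ᵇ)`, and none of these `294` automorphisms has
order `6` (in `PGL₃`: if its 6th power is scalar, then already its square or cube is scalar). -/
theorem fermat_septic_automorphisms {k : Type*} [Field k] [IsAlgClosed k]
    (hchar : ∀ p : ℕ, CharP k p → p = 0 ∨ 31 < p)
    (ζ : k) (hζ : IsPrimitiveRoot ζ 7) :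
    ∀ M : Matrix (Fin 3) (Fin 3) k, IsUnit M →
      (∀ v : Fin 3 → k, (∑ i, v i ^ 7) = 0 → (∑ i, (M.mulVec v) i ^ 7) = 0) →
      ((∃ (σ : Equiv.Perm (Fin 3)) (a b : ℕ) (c : k), c ≠ 0 ∧
          c • M = Matrix.of
            (fun i j => if σ j = i then (![1, ζ ^ a, ζ ^ b] : Fin 3 → k) j else 0)) ∧
        ((∃ c : k, c ≠ 0 ∧ M ^ 6 = c • (1 : Matrix (Fin 3) (Fin 3) k)) →
          (∃ c : k, c ≠ 0 ∧ M ^ 2 = c • (1 : Matrix (Fin 3) (Fin 3) k)) ∨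
          (∃ c : k, c ≠ 0 ∧ M ^ 3 = c • (1 : Matrix (Fin 3) (Fin 3) k)))) := by
  intro M hM hpres
  have h42 : ((7 * (7 - 1) : ℕ) : k) ≠ 0 := by
    rw [Nat.cast_mul]
    exact mul_ne_zero (natCast_ne_zero_of_forall_charP hchar (by norm_num) (by norm_num))
      (natCast_ne_zero_of_forall_charP hchar (by norm_num) (by norm_num))
  obtain ⟨σ, e, c, hc, he, rfl⟩ := exists_monomialMatrix_of_forall_sum_pow_eq_zero (by norm_num)
    h42 hζ ((isUnit_iff_isUnit_det _).1 hM).ne_zero hpres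
  refine ⟨⟨σ, exists_smul_monomialMatrix_eq hζ hc he⟩, fun ⟨a, _, ha⟩ => ?_⟩
  rcases (by decide : ∀ τ : Equiv.Perm (Fin 3), τ ^ 2 = 1 ∨ τ ^ 3 = 1) σ with hσ | hσ
  · exact .inl (exists_pow_eq_smul_one (r := 3) (by norm_num) hσ hc he ⟨a, ha⟩)
  · exact .inr (exists_pow_eq_smul_one (r := 2) (by norm_num) hσ hc he ⟨a, ha⟩)
end

section
/- Let d ≥ 7 be odd and C the plane curve X^d + X^{d-2}Y² + X^{(d-1)/2}YZ^{(d-1)/2} + aXY^{d-1} + bXZ^{d-1} + cY^{(d+1)/2}Z^{(d-1)/2} = 0 (when d ≡ 1 mod 4). Then every diagonal projective automorphism diag(1, λ, μ) of C satisfies λ² = λμ^{(d-1)/2} = λ^{d-1} = μ^{d-1} = 1, hence the group of diagonal automorphisms is cyclic of order d-1 generated by [X : -Y : ζ_{d-1}Z]. -/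
/-!
Restricting the invariance identity `F(x, λy, μz) = e F(x, y, z)` to the lines `z = 0`, `y = 0`
and `z = x` and comparing coefficients of the resulting one-variable polynomials gives `e = 1`,
`λ² = λ^{d-1} = 1`, `μ^{d-1} = 1` and `λ μ^{(d-1)/2} = 1`. Hence `λ = μ^{(d-1)/2}`, and writing
`μ = ζ^r` gives `λ = (ζ^{(d-1)/2})^r = (-1)^r`.
-/

open Polynomial in
theorem eq_zero_of_forall_add_mul_pow_add_mul_pow_eq_zero {R : Type*} [CommRing R] [IsDomain R]
    [Infinite R] {u v w : R} {n m : ℕ} (hn : 0 < n) (hnm : n < m)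
    (h : ∀ y : R, u + v * y ^ n + w * y ^ m = 0) :
    u = 0 ∧ v = 0 ∧ w = 0 := by
  have hp : (C u + C v * X ^ n + C w * X ^ m : R[X]) = 0 :=
    Polynomial.funext fun y => by simpa using h y
  have h0 := congrArg (coeff · 0) hp
  have h1 := congrArg (coeff · n) hp
  have h2 := congrArg (coeff · m) hp
  simp [coeff_C, coeff_X_pow, hn.ne, hn.ne', hnm.ne, hnm.ne', (hn.trans hnm).ne,
    (hn.trans hnm).ne'] at h0 h1 h2
  exact ⟨h0, h1, h2⟩

theorem IsPrimitiveRoot.pow_eq_neg_one_of_two_mul {R : Type*} [CommRing R] [IsDomain R] {ζ : R}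
    {n : ℕ} (hζ : IsPrimitiveRoot ζ (2 * n)) (hn : n ≠ 0) : ζ ^ n = -1 :=
  (by simpa [hn] using hζ.pow_of_dvd hn (dvd_mul_left n 2) : IsPrimitiveRoot (ζ ^ n) 2)
    |>.eq_neg_one_of_two_right

theorem IsPrimitiveRoot.exists_pow_eq_neg_one_pow {R : Type*} [CommRing R] [IsDomain R]
    {ζ μ : R} {n : ℕ} (hζ : IsPrimitiveRoot ζ (2 * n)) (hn : n ≠ 0) (hμ : μ ^ (2 * n) = 1) :
    ∃ r : ℕ, μ ^ n = (-1) ^ r ∧ μ = ζ ^ r := by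
  have : NeZero (2 * n) := ⟨by omega⟩
  obtain ⟨r, -, rfl⟩ := hζ.eq_pow_of_pow_eq_one hμ
  exact ⟨r, by rw [← pow_mul, mul_comm, pow_mul, hζ.pow_eq_neg_one_of_two_mul hn], rfl⟩

/-- The defining form of the curve of degree `d = 4t + 1`. -/
def curveForm {k : Type*} [Field k] (t : ℕ) (a b c x y z : k) : k :=
  x ^ (4 * t + 1) + x ^ (4 * t - 1) * y ^ 2 + x ^ (2 * t) * y * z ^ (2 * t) +
    a * x * y ^ (4 * t) + b * x * z ^ (4 * t) + c * y ^ (2 * t + 1) * z ^ (2 * t)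

section CurveForm

variable {k : Type*} [Field k] {t : ℕ} {a b c lam mu e : k}

theorem curveForm_one_y_zero (ht : t ≠ 0) (y : k) :
    curveForm t a b c 1 y 0 = 1 + y ^ 2 + a * y ^ (4 * t) := by
  simp [curveForm, ht]

theorem curveForm_one_zero_z (ht : t ≠ 0) (z : k) :
    curveForm t a b c 1 0 z = 1 + b * z ^ (4 * t) := by
  simp [curveForm, ht]

theorem curveForm_one_y_z (y z : k) :
    curveForm t a b c 1 y z =
      1 + y ^ 2 + y * z ^ (2 * t) + a * y ^ (4 * t) + b * z ^ (4 * t) +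
        c * y ^ (2 * t + 1) * z ^ (2 * t) := by
  simp [curveForm]

theorem eq_one_and_sq_eq_one_of_curveForm [Infinite k] (ht : t ≠ 0) (ha : a ≠ 0)
    (hF : ∀ x y z, curveForm t a b c x (lam * y) (mu * z) = e * curveForm t a b c x y z) :
    e = 1 ∧ lam ^ 2 = 1 ∧ lam ^ (4 * t) = 1 := by
  obtain ⟨h0, h2, h4⟩ := eq_zero_of_forall_add_mul_pow_add_mul_pow_eq_zero
    (u := 1 - e) (v := lam ^ 2 - e) (w := a * (lam ^ (4 * t) - e)) (m := 4 * t) two_pos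
    (by omega) fun y => by
      have := hF 1 y 0
      rw [mul_zero, curveForm_one_y_zero ht, curveForm_one_y_zero ht] at this
      linear_combination this
  obtain rfl : e = 1 := by linear_combination -h0
  exact ⟨rfl, by linear_combination h2,
    sub_eq_zero.mp ((mul_eq_zero.mp h4).resolve_left ha)⟩

theorem pow_eq_one_of_curveForm (ht : t ≠ 0) (hb : b ≠ 0)
    (hF : ∀ x y z, curveForm t a b c x (lam * y) (mu * z) = curveForm t a b c x y z) :
    mu ^ (4 * t) = 1 := by
  have := hF 1 0 1
  rw [mul_zero, mul_one, curveForm_one_zero_z ht, curveForm_one_zero_z ht, one_pow, mul_one,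
    add_right_inj] at this
  exact (mul_eq_left₀ hb).mp this

theorem mul_pow_eq_one_of_curveForm [Infinite k] (ht : t ≠ 0) (hlam : lam ^ 2 = 1)
    (hmu : mu ^ (4 * t) = 1)
    (hF : ∀ x y z, curveForm t a b c x (lam * y) (mu * z) = curveForm t a b c x y z) :
    lam * mu ^ (2 * t) = 1 := by
  have hlam4 : lam ^ (4 * t) = 1 := by
    rw [show 4 * t = 2 * (2 * t) by ring, pow_mul, hlam, one_pow]
  have hlam_odd : lam ^ (2 * t + 1) = lam := by rw [pow_succ, pow_mul, hlam, one_pow, one_mul]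
  obtain ⟨-, h, -⟩ := eq_zero_of_forall_add_mul_pow_add_mul_pow_eq_zero (u := 0)
    (v := lam * mu ^ (2 * t) - 1) (w := c * (lam * mu ^ (2 * t) - 1)) (m := 2 * t + 1) one_pos
    (by omega) fun y => by
      have := hF 1 y 1
      rw [curveForm_one_y_z, curveForm_one_y_z] at this
      simp only [mul_one, one_pow, mul_pow, hlam, hlam4, hlam_odd, hmu] at this
      linear_combination this
  exact sub_eq_zero.mp h

end CurveForm

theorem diagonal_automorphisms_cyclic_general {k : Type*} [Field k] [IsAlgClosed k]
    (d : ℕ) (hd : 7 ≤ d) (hd4 : d % 4 = 1)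
    (a b c ζ : k) (hab : a * b ≠ 0) (hζ : IsPrimitiveRoot ζ (d - 1))
    (lam mu : k)
    (hauto : ∃ e : k, e ≠ 0 ∧ ∀ x y z : k,
      x ^ d + x ^ (d - 2) * (lam * y) ^ 2 +
        x ^ ((d - 1) / 2) * (lam * y) * (mu * z) ^ ((d - 1) / 2) +
        a * x * (lam * y) ^ (d - 1) + b * x * (mu * z) ^ (d - 1) +
        c * (lam * y) ^ ((d + 1) / 2) * (mu * z) ^ ((d - 1) / 2) =
      e * (x ^ d + x ^ (d - 2) * y ^ 2 + x ^ ((d - 1) / 2) * y * z ^ ((d - 1) / 2) +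
        a * x * y ^ (d - 1) + b * x * z ^ (d - 1) +
        c * y ^ ((d + 1) / 2) * z ^ ((d - 1) / 2))) :
    (lam ^ 2 = 1 ∧ lam * mu ^ ((d - 1) / 2) = 1 ∧ lam ^ (d - 1) = 1 ∧ mu ^ (d - 1) = 1) ∧
    ∃ r : ℕ, lam = (-1 : k) ^ r ∧ mu = ζ ^ r := by
  obtain ⟨t, rfl⟩ : ∃ t, d = 4 * t + 1 := ⟨d / 4, by omega⟩
  have ht : t ≠ 0 := by omega
  simp only [show 4 * t + 1 - 1 = 4 * t by omega, show 4 * t + 1 - 2 = 4 * t - 1 by omega,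
    show 4 * t / 2 = 2 * t by omega, show (4 * t + 1 + 1) / 2 = 2 * t + 1 by omega] at hauto hζ ⊢
  obtain ⟨e, -, hF⟩ := hauto
  replace hF : ∀ x y z, curveForm t a b c x (lam * y) (mu * z) = e * curveForm t a b c x y z := hF
  obtain ⟨rfl, hlam2, hlam⟩ := eq_one_and_sq_eq_one_of_curveForm ht (left_ne_zero_of_mul hab) hF
  simp only [one_mul] at hF
  have hmu := pow_eq_one_of_curveForm ht (right_ne_zero_of_mul hab) hF
  have hlammu := mul_pow_eq_one_of_curveForm ht hlam2 hmu hF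
  have hlam_eq : lam = mu ^ (2 * t) := by linear_combination mu ^ (2 * t) * hlam2 - lam * hlammu
  have h4t : 4 * t = 2 * (2 * t) := by ring
  obtain ⟨r, hr, rfl⟩ := (h4t ▸ hζ).exists_pow_eq_neg_one_pow (by omega) (h4t ▸ hmu)
  exact ⟨⟨hlam2, hlammu, hlam, hmu⟩, r, hlam_eq.trans hr, rfl⟩

/-- For odd `d ≥ 7` with `d ≡ 1 mod 4` and the plane curve
`X^d + X^{d-2}Y² + X^{(d-1)/2}YZ^{(d-1)/2} + aXY^{d-1} + bXZ^{d-1} + cY^{(d+1)/2}Z^{(d-1)/2} = 0`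
(with `ab ≠ 0`), every diagonal projective automorphism `diag(1, λ, μ)` satisfies
`λ² = λμ^{(d-1)/2} = λ^{d-1} = μ^{d-1} = 1`; hence the diagonal automorphisms form the cyclic
group of order `d-1` generated by `[X : -Y : ζ_{d-1}Z]`, i.e. `(λ, μ) = ((-1)^r, ζ^r)`. -/
theorem diagonal_automorphisms_cyclic {k : Type*} [Field k] [IsAlgClosed k]
    (d : ℕ) (hd : 7 ≤ d) (hd4 : d % 4 = 1)
    (hchar : ∀ p : ℕ, CharP k p → p = 0 ∨ (d - 1) * (d - 2) + 1 < p)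
    (a b c ζ : k) (hab : a * b ≠ 0) (hζ : IsPrimitiveRoot ζ (d - 1))
    (lam mu : k)
    (hauto : ∃ e : k, e ≠ 0 ∧ ∀ x y z : k,
      x ^ d + x ^ (d - 2) * (lam * y) ^ 2 +
        x ^ ((d - 1) / 2) * (lam * y) * (mu * z) ^ ((d - 1) / 2) +
        a * x * (lam * y) ^ (d - 1) + b * x * (mu * z) ^ (d - 1) +
        c * (lam * y) ^ ((d + 1) / 2) * (mu * z) ^ ((d - 1) / 2) =
      e * (x ^ d + x ^ (d - 2) * y ^ 2 + x ^ ((d - 1) / 2) * y * z ^ ((d - 1) / 2) +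
        a * x * y ^ (d - 1) + b * x * z ^ (d - 1) +
        c * y ^ ((d + 1) / 2) * z ^ ((d - 1) / 2))) :
    (lam ^ 2 = 1 ∧ lam * mu ^ ((d - 1) / 2) = 1 ∧ lam ^ (d - 1) = 1 ∧ mu ^ (d - 1) = 1) ∧
    ∃ r : ℕ, lam = (-1 : k) ^ r ∧ mu = ζ ^ r :=
  diagonal_automorphisms_cyclic_general d hd hd4 a b c ζ hab hζ lam mu hauto
end

section
/- The transformation η: (X:Y:Z) ↦ (X : -Y : ζ_{d-1}Z) has order d-1 in PGL_3(k̄) for odd d ≥ 7, and preserves the curve X^d + X^{d-2}Y² + X^{(d-1)/2}YZ^{(d-1)/2} + aXY^{d-1} + bXZ^{d-1} + cX²Y^{(d-1)/2}Z^{(d-1)/2} = 0 when d ≡ 3 mod 4. -/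
open Matrix

/-- For odd `d ≥ 7` with `d ≡ 3 mod 4`, the transformation `η : (X:Y:Z) ↦ (X : -Y : ζ_{d-1}Z)`
has order `d-1` in `PGL₃(k̄)` and preserves the curve
`X^d + X^{d-2}Y² + X^{(d-1)/2}YZ^{(d-1)/2} + aXY^{d-1} + bXZ^{d-1} + cX²Y^{(d-1)/2}Z^{(d-1)/2} = 0`. -/
theorem eta_order_and_preserves {k : Type*} [Field k] [IsAlgClosed k]
    (d : ℕ) (hd : 7 ≤ d) (hd4 : d % 4 = 3)
    (hchar : ∀ p : ℕ, CharP k p → p = 0 ∨ (d - 1) * (d - 2) + 1 < p)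
    (a b c ζ : k) (hζ : IsPrimitiveRoot ζ (d - 1)) :
    (∀ n : ℕ, 0 < n → n < d - 1 →
      ¬∃ e : k, (Matrix.diagonal ![1, -1, ζ]) ^ n = e • (1 : Matrix (Fin 3) (Fin 3) k)) ∧
    (∃ e : k, (Matrix.diagonal ![1, -1, ζ]) ^ (d - 1) = e • (1 : Matrix (Fin 3) (Fin 3) k)) ∧
    (∃ e : k, e ≠ 0 ∧ ∀ x y z : k,
      x ^ d + x ^ (d - 2) * (-y) ^ 2 +
        x ^ ((d - 1) / 2) * (-y) * (ζ * z) ^ ((d - 1) / 2) +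
        a * x * (-y) ^ (d - 1) + b * x * (ζ * z) ^ (d - 1) +
        c * x ^ 2 * (-y) ^ ((d - 1) / 2) * (ζ * z) ^ ((d - 1) / 2) =
      e * (x ^ d + x ^ (d - 2) * y ^ 2 + x ^ ((d - 1) / 2) * y * z ^ ((d - 1) / 2) +
        a * x * y ^ (d - 1) + b * x * z ^ (d - 1) +
        c * x ^ 2 * y ^ ((d - 1) / 2) * z ^ ((d - 1) / 2))) := by
  have hζd : ζ ^ (d - 1) = 1 := hζ.pow_eq_one
  -- characteristic ≠ 2
  have h30 : 30 ≤ (d - 1) * (d - 2) := le_trans (by norm_num) (Nat.mul_le_mul (by omega : 6 ≤ d - 1) (by omega : 5 ≤ d - 2))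
  have h2 : (2 : k) ≠ 0 := by
    intro h2
    rcases hchar (ringChar k) (ringChar.charP k) with h0 | hp
    · have : ((2 : ℕ) : k) = 0 := by exact_mod_cast h2
      have hdvd := (CharP.cast_eq_zero_iff k (ringChar k) 2).mp this
      rw [h0] at hdvd
      simp at hdvd
    · have : ((2 : ℕ) : k) = 0 := by exact_mod_cast h2
      have hdvd := (CharP.cast_eq_zero_iff k (ringChar k) 2).mp this
      have := Nat.le_of_dvd (by norm_num) hdvd
      omega
  obtain ⟨q, hq⟩ : ∃ q, d = 4 * q + 3 := ⟨d / 4, by omega⟩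
  have em : (d - 1) / 2 = 2 * q + 1 := by omega
  have ed1 : d - 1 = 4 * q + 2 := by omega
  have hζm : ζ ^ (2 * q + 1) = -1 := by
    have hsq : ζ ^ (2 * q + 1) * ζ ^ (2 * q + 1) = 1 := by
      rw [← pow_add]
      have : 2 * q + 1 + (2 * q + 1) = d - 1 := by omega
      rw [this]; exact hζd
    rcases mul_self_eq_one_iff.mp hsq with h1 | h1
    · exact absurd h1 (hζ.pow_ne_one_of_pos_of_lt (by omega) (by omega))
    · exact h1
  have key : ∀ n : ℕ, (Matrix.diagonal ![1, -1, ζ] : Matrix (Fin 3) (Fin 3) k) ^ n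
      = Matrix.diagonal ![1, (-1) ^ n, ζ ^ n] := by
    intro n
    rw [Matrix.diagonal_pow]
    refine congrArg Matrix.diagonal ?_
    funext i
    fin_cases i <;> simp [Pi.pow_apply]
  refine ⟨?_, ?_, ?_⟩
  · rintro n hn hlt ⟨e, he⟩
    rw [key] at he
    have h00 := congrFun (congrFun he 0) 0
    have h22 := congrFun (congrFun he 2) 2
    simp [Matrix.diagonal_apply_eq, Matrix.smul_apply, Matrix.one_apply_eq] at h00 h22
    exact hζ.pow_ne_one_of_pos_of_lt hn.ne' hlt (by rw [h22, ← h00])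
  · refine ⟨1, ?_⟩
    rw [key, one_smul]
    have hm1 : (-1 : k) ^ (d - 1) = 1 := by
      rw [ed1]
      exact Even.neg_one_pow ⟨2 * q + 1, by ring⟩
    rw [hζd, hm1]
    have : (![1, 1, 1] : Fin 3 → k) = fun _ => 1 := by funext i; fin_cases i <;> simp
    rw [this, ← Matrix.diagonal_one]
  · refine ⟨1, one_ne_zero, fun x y z => ?_⟩
    rw [one_mul, em, ed1]
    have h1 : (ζ * z) ^ (2 * q + 1) = -z ^ (2 * q + 1) := by rw [mul_pow, hζm]; ring
    have h2 : (ζ * z) ^ (4 * q + 2) = z ^ (4 * q + 2) := by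
      rw [mul_pow, ← ed1, hζd, one_mul]
    have hy2 : (-y) ^ 2 = y ^ 2 := neg_sq y
    have hyE : (-y) ^ (4 * q + 2) = y ^ (4 * q + 2) := Even.neg_pow ⟨2 * q + 1, by ring⟩ y
    have hyO : (-y) ^ (2 * q + 1) = -y ^ (2 * q + 1) := Odd.neg_pow ⟨q, by ring⟩ y
    rw [h1, h2, hy2, hyE, hyO]
    ring
end
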